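/- arXiv:1608.01852 — 3 statements merged into one kernel-verified Lean document; each statement's English description precedes it below -/
import Mathlib

section
/- Let u : ℝ^n → ℝ be a smooth strictly convex function and Δ ⊂ ℝ^n a bounded convex polytope containing 0 in its interior, with support function v_{2Δ}(x) = sup{⟨m,x⟩ : m ∈ 2Δ}. If u - v_{2Δ} is bounded on ℝ^n, then for every ξ ∈ ℝ^n, ∫_{ℝ^n} ⟨∇u(x), ξ⟩ e^{-u(x)} dx = 0. -/
open MeasureTheory
open scoped InnerProductSpace Pointwise


lemma aux_int {n : ℕ} {A B c : ℝ} (hA : 0 ≤ A) (hB : 0 ≤ B) (hc : 0 < c) :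
    MeasureTheory.Integrable (fun x : EuclideanSpace ℝ (Fin n) =>
      (A + B * ‖x‖) * Real.exp (-(c * ‖x‖))) := by
  set r : ℝ := n + 1 with hr
  set δ : ℝ := c / (n + 2) with hδ
  have hδ0 : 0 < δ := by positivity
  set K : ℝ := max 1 δ⁻¹ with hK
  have hK1 : 1 ≤ K := le_max_left _ _
  have hKδ : 1 ≤ K * δ := by
    rw [hK]
    calc (1:ℝ) = δ⁻¹ * δ := by field_simp
    _ ≤ max 1 δ⁻¹ * δ := by
        apply mul_le_mul_of_nonneg_right (le_max_right _ _) hδ0.le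
  set M : ℝ := (A + B / δ) * K ^ r with hM
  have hM0 : 0 ≤ M := by
    apply mul_nonneg (by positivity)
    exact Real.rpow_nonneg (by linarith) r
  have key : ∀ t : ℝ, 0 ≤ t →
      (A + B * t) * Real.exp (-(c * t)) ≤ M * (1 + t) ^ (-r) := by
    intro t ht
    have h1t : (0:ℝ) < 1 + t := by linarith
    have he : 1 + δ * t ≤ Real.exp (δ * t) := by
      have := Real.add_one_le_exp (δ * t); linarith
    have he1 : (1:ℝ) ≤ Real.exp (δ * t) := by nlinarith [mul_nonneg hδ0.le ht]
    have h1 : 1 + t ≤ K * Real.exp (δ * t) := by nlinarith [mul_nonneg hδ0.le ht]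
    have h2 : (1 + t) ^ r ≤ K ^ r * Real.exp (δ * t * r) := by
      calc (1 + t) ^ r ≤ (K * Real.exp (δ * t)) ^ r :=
            Real.rpow_le_rpow h1t.le h1 (by positivity)
      _ = K ^ r * Real.exp (δ * t * r) := by
          rw [Real.mul_rpow (by linarith) (Real.exp_pos _).le, ← Real.exp_mul]
    have h3 : A + B * t ≤ (A + B / δ) * Real.exp (δ * t) := by
      have hBt : B * t ≤ B / δ * Real.exp (δ * t) := by
        have : δ * t ≤ Real.exp (δ * t) := by linarith
        calc B * t = B / δ * (δ * t) := by field_simp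
        _ ≤ B / δ * Real.exp (δ * t) := by
            apply mul_le_mul_of_nonneg_left this (by positivity)
      nlinarith
    have hchain : (A + B * t) * (1 + t) ^ r ≤ M * Real.exp (c * t) := by
      have hprod : (A + B * t) * (1 + t) ^ r ≤
          ((A + B / δ) * Real.exp (δ * t)) * (K ^ r * Real.exp (δ * t * r)) := by
        apply mul_le_mul h3 h2 (Real.rpow_nonneg h1t.le r) (by positivity)
      have heq : ((A + B / δ) * Real.exp (δ * t)) * (K ^ r * Real.exp (δ * t * r))
          = M * Real.exp (c * t) := by
        have : Real.exp (δ * t) * Real.exp (δ * t * r) = Real.exp (c * t) := by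
          rw [← Real.exp_add]
          congr 1
          rw [hδ, hr]; field_simp; ring
        rw [hM]
        calc (A + B / δ) * Real.exp (δ * t) * (K ^ r * Real.exp (δ * t * r))
            = (A + B / δ) * K ^ r * (Real.exp (δ * t) * Real.exp (δ * t * r)) := by ring
        _ = (A + B / δ) * K ^ r * Real.exp (c * t) := by rw [this]
      linarith [hprod, heq ▸ hprod]
    rw [Real.rpow_neg h1t.le, Real.exp_neg, ← div_eq_mul_inv, ← div_eq_mul_inv,
      div_le_div_iff₀ (Real.exp_pos _) (Real.rpow_pos_of_pos h1t r)]
    linarith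
  apply Integrable.mono' ((integrable_one_add_norm (E := EuclideanSpace ℝ (Fin n))
    (r := r) (by simp [hr])).const_mul M)
  · apply Continuous.aestronglyMeasurable
    fun_prop
  · filter_upwards with x
    rw [Real.norm_of_nonneg (by positivity)]
    exact key ‖x‖ (norm_nonneg x)

/-- Let `u : ℝⁿ → ℝ` be a smooth strictly convex function, and `Δ ⊂ ℝⁿ` a bounded
convex polytope containing `0` in its interior, with support function
`v(x) = sup {⟪m, x⟫ : m ∈ 2Δ}`.  If `u - v` is bounded on ℝⁿ, then for every
`ξ ∈ ℝⁿ`, `∫ ⟪∇u(x), ξ⟫ e^{-u(x)} dx = 0`. -/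
theorem stmt0 {n : ℕ} (u : EuclideanSpace ℝ (Fin n) → ℝ)
    (hu : ContDiff ℝ (⊤ : ℕ∞) u) (hconv : StrictConvexOn ℝ Set.univ u)
    (Δ : Set (EuclideanSpace ℝ (Fin n)))
    (hpoly : ∃ S : Finset (EuclideanSpace ℝ (Fin n)),
      Δ = convexHull ℝ (S : Set (EuclideanSpace ℝ (Fin n))))
    (h0 : (0 : EuclideanSpace ℝ (Fin n)) ∈ interior Δ)
    (v : EuclideanSpace ℝ (Fin n) → ℝ)
    (hv : ∀ x, IsLUB ((fun q => ⟪q, x⟫_ℝ) '' ((2 : ℝ) • Δ)) (v x))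
    (hbd : ∃ C : ℝ, ∀ x, |u x - v x| ≤ C) :
    ∀ ξ : EuclideanSpace ℝ (Fin n),
      ∫ x, ⟪gradient u x, ξ⟫_ℝ * Real.exp (-u x) = 0 := by
  intro ξ
  obtain ⟨C, hC⟩ := hbd
  -- basic facts
  have hdiff : Differentiable ℝ u := hu.differentiable (by simp)
  have hgrad : ∀ x y, ⟪gradient u x, y⟫_ℝ = fderiv ℝ u x y := by
    intro x y
    have h1 : HasGradientAt u (gradient u x) x := (hdiff x).hasGradientAt
    have h2 : HasFDerivAt u (fderiv ℝ u x) x := (hdiff x).hasFDerivAt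
    have := (hasGradientAt_iff_hasFDerivAt.mp h1).unique h2
    rw [← this]
    simp [InnerProductSpace.toDual_apply_apply]
  -- 0 ∈ Δ
  have h0Δ : (0 : EuclideanSpace ℝ (Fin n)) ∈ Δ := interior_subset h0
  -- C ≥ 0
  have hC0 : 0 ≤ C := (abs_nonneg _).trans (hC 0)
  -- ball ⊆ Δ
  obtain ⟨ε, hε0, hball⟩ : ∃ ε > 0, Metric.ball (0 : EuclideanSpace ℝ (Fin n)) ε ⊆ Δ :=
    Metric.mem_nhds_iff.mp (mem_interior_iff_mem_nhds.mp h0)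
  -- lower bound for v
  have hvlb : ∀ x, ε * ‖x‖ ≤ v x := by
    intro x
    rcases eq_or_ne x 0 with rfl | hx
    · simp only [norm_zero, mul_zero]
      have h0mem : (0 : EuclideanSpace ℝ (Fin n)) ∈ (2 : ℝ) • Δ :=
        ⟨0, h0Δ, by simp⟩
      have := (hv 0).1 ⟨0, h0mem, rfl⟩
      simpa using this
    · have hxn : (0:ℝ) < ‖x‖ := norm_pos_iff.mpr hx
      set m : EuclideanSpace ℝ (Fin n) := ((ε/2) / ‖x‖) • x with hm
      have hmΔ : m ∈ Δ := by
        apply hball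
        rw [Metric.mem_ball, dist_zero_right, hm, norm_smul]
        rw [Real.norm_of_nonneg (by positivity)]
        rw [div_mul_cancel₀ _ hxn.ne']
        linarith
      have hq : (2:ℝ) • m ∈ (2:ℝ) • Δ := ⟨m, hmΔ, rfl⟩
      have hle : ⟪(2:ℝ) • m, x⟫_ℝ ≤ v x := (hv x).1 ⟨(2:ℝ) • m, hq, rfl⟩
      have hinner : ⟪(2:ℝ) • m, x⟫_ℝ = ε * ‖x‖ := by
        rw [hm, smul_smul, real_inner_smul_left, real_inner_self_eq_norm_sq]
        field_simp
      rw [hinner] at hle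
      exact hle
  have hv0 : ∀ x, 0 ≤ v x := fun x => le_trans (by positivity) (hvlb x)
  -- upper bound for v
  obtain ⟨S, hS⟩ := hpoly
  have hbdd : Bornology.IsBounded Δ := by
    rw [hS, isBounded_convexHull]
    exact S.finite_toSet.isBounded
  obtain ⟨R, hR⟩ := hbdd.exists_norm_le
  have hR0 : 0 ≤ R := le_trans (by simp) (hR 0 h0Δ)
  have hvub : ∀ x, v x ≤ 2 * R * ‖x‖ := by
    intro x
    apply (hv x).2
    rintro - ⟨q, ⟨m, hmΔ, rfl⟩, rfl⟩
    show ⟪(2:ℝ) • m, x⟫_ℝ ≤ 2 * R * ‖x‖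
    have h1 : ⟪(2:ℝ) • m, x⟫_ℝ = 2 * ⟪m, x⟫_ℝ := real_inner_smul_left _ _ _
    have h2 : ⟪m, x⟫_ℝ ≤ ‖m‖ * ‖x‖ := real_inner_le_norm m x
    have h3 : ‖m‖ * ‖x‖ ≤ R * ‖x‖ :=
      mul_le_mul_of_nonneg_right (hR m hmΔ) (norm_nonneg x)
    rw [h1]; linarith
  -- bounds on u
  have hul : ∀ x, v x - C ≤ u x := fun x => by
    have := abs_le.mp (hC x); linarith [this.1]
  have huu : ∀ x, u x ≤ v x + C := fun x => by
    have := abs_le.mp (hC x); linarith [(abs_le.mp (hC x)).2]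
  -- gradient bound
  set D : ℝ := 2 * R * ‖ξ‖ + 2 * C with hD
  have hD0 : 0 ≤ D := by positivity
  have hgb : ∀ x, |fderiv ℝ u x ξ| ≤ 2 * R * ‖x‖ + D := by
    intro x
    set φ : ℝ → ℝ := fun t => u (x + t • ξ) with hφ
    have hφconv : ConvexOn ℝ Set.univ φ := by
      have := hconv.convexOn.comp_affineMap (AffineMap.lineMap x (x + ξ) : ℝ →ᵃ[ℝ] _)
      have heq : φ = u ∘ (AffineMap.lineMap x (x + ξ) : ℝ →ᵃ[ℝ] _) := by
        funext t
        simp [hφ, AffineMap.lineMap_apply, add_comm]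
      rw [heq]
      simpa using this
    have hφd : ∀ t : ℝ, HasDerivAt φ (fderiv ℝ u (x + t • ξ) ξ) t := by
      intro t
      have h1 : HasDerivAt (fun t : ℝ => x + t • ξ) ξ t := by
        simpa using ((hasDerivAt_id t).smul_const ξ).const_add x
      exact (hdiff (x + t • ξ)).hasFDerivAt.comp_hasDerivAt t h1
    have h0eq : x + (0:ℝ) • ξ = x := by simp
    have hupper : fderiv ℝ u x ξ ≤ u (x + ξ) - u x := by
      have := hφconv.le_slope_of_hasDerivAt (Set.mem_univ 0) (Set.mem_univ 1)
        one_pos (h0eq ▸ hφd 0)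
      rw [slope_def_field] at this
      simpa [hφ] using this
    have hlower : u x - u (x + (-1:ℝ) • ξ) ≤ fderiv ℝ u x ξ := by
      have := hφconv.slope_le_of_hasDerivAt (Set.mem_univ (-1)) (Set.mem_univ 0)
        (by norm_num) (h0eq ▸ hφd 0)
      rw [slope_def_field] at this
      have h2 : (φ 0 - φ (-1)) / (0 - (-1)) = φ 0 - φ (-1) := by norm_num
      rw [h2] at this
      simpa [hφ] using this
    rw [abs_le]
    constructor
    · have hb : u x - u (x + (-1:ℝ) • ξ) ≥ (v x - C) - (v (x + (-1:ℝ) • ξ) + C) := by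
        have := hul x; have := huu (x + (-1:ℝ) • ξ); linarith
      have hnx : v (x + (-1:ℝ) • ξ) ≤ 2 * R * (‖x‖ + ‖ξ‖) := by
        have := hvub (x + (-1:ℝ) • ξ)
        have hn : ‖x + (-1:ℝ) • ξ‖ ≤ ‖x‖ + ‖ξ‖ := by
          calc ‖x + (-1:ℝ) • ξ‖ ≤ ‖x‖ + ‖(-1:ℝ) • ξ‖ := norm_add_le _ _
          _ = ‖x‖ + ‖ξ‖ := by rw [norm_smul]; simp
        nlinarith [norm_nonneg x, norm_nonneg ξ]
      have := hv0 x
      linarith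
    · have hb : u (x + ξ) - u x ≤ (v (x + ξ) + C) - (v x - C) := by
        have := huu (x + ξ); have := hul x; linarith
      have hnx : v (x + ξ) ≤ 2 * R * (‖x‖ + ‖ξ‖) := by
        have := hvub (x + ξ)
        have hn : ‖x + ξ‖ ≤ ‖x‖ + ‖ξ‖ := norm_add_le _ _
        nlinarith [norm_nonneg x, norm_nonneg ξ]
      have := hv0 x
      linarith
  -- exp bound
  have hexpb : ∀ x : EuclideanSpace ℝ (Fin n),
      Real.exp (-u x) ≤ Real.exp C * Real.exp (-(ε * ‖x‖)) := by
    intro x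
    rw [← Real.exp_add]
    apply Real.exp_le_exp.mpr
    have := hul x; have := hvlb x; linarith
  -- continuity
  have hcontu : Continuous u := hu.continuous
  have hcontf : Continuous fun x => fderiv ℝ u x ξ := by
    have h1 : Continuous (fderiv ℝ u) := (hu.continuous_fderiv (by simp))
    exact (ContinuousLinearMap.apply ℝ ℝ ξ).continuous.comp h1
  -- integrabilities
  have hIg : Integrable (fun x : EuclideanSpace ℝ (Fin n) => Real.exp (-u x)) := by
    apply Integrable.mono' (aux_int (n := n) (A := Real.exp C) (B := 0)
      (Real.exp_pos C).le le_rfl hε0)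
    · exact (Real.continuous_exp.comp hcontu.neg).aestronglyMeasurable
    · filter_upwards with x
      rw [Real.norm_of_nonneg (Real.exp_pos _).le]
      simpa using hexpb x
  have hIg' : Integrable (fun x : EuclideanSpace ℝ (Fin n) =>
      -(fderiv ℝ u x ξ * Real.exp (-u x))) := by
    apply Integrable.neg
    apply Integrable.mono' (aux_int (n := n) (A := Real.exp C * D)
      (B := Real.exp C * (2 * R)) (by positivity) (by positivity) hε0)
    · exact (hcontf.mul (Real.continuous_exp.comp hcontu.neg)).aestronglyMeasurable
    · filter_upwards with x
      rw [norm_mul, Real.norm_of_nonneg (Real.exp_pos _).le, Real.norm_eq_abs]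
      calc |fderiv ℝ u x ξ| * Real.exp (-u x)
          ≤ (2 * R * ‖x‖ + D) * (Real.exp C * Real.exp (-(ε * ‖x‖))) := by
            apply mul_le_mul (hgb x) (hexpb x) (Real.exp_pos _).le
            positivity
      _ = (Real.exp C * D + Real.exp C * (2 * R) * ‖x‖) * Real.exp (-(ε * ‖x‖)) := by
            ring
  -- integration by parts with constant function 1
  have hkey := integral_bilinear_hasLineDerivAt_right_eq_neg_left_of_integrable
    (μ := (volume : Measure (EuclideanSpace ℝ (Fin n))))
    (B := ContinuousLinearMap.mul ℝ ℝ)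
    (f := fun _ => (1:ℝ)) (f' := fun _ => (0:ℝ))
    (g := fun x => Real.exp (-u x))
    (g' := fun x => -(fderiv ℝ u x ξ * Real.exp (-u x))) (v := ξ)
    (by simpa using (integrable_zero _ _ _))
    (by simpa using hIg')
    (by simpa using hIg)
    (fun x _ => by
      simpa using (hasFDerivAt_const (1:ℝ) x).hasLineDerivAt ξ)
    (fun x _ => by
      have h1 : HasFDerivAt (fun x => Real.exp (-u x))
          (Real.exp (-u x) • (-fderiv ℝ u x)) x := (hdiff x).hasFDerivAt.neg.exp
      have h2 := h1.hasLineDerivAt ξ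
      have h3 : (Real.exp (-u x) • (-fderiv ℝ u x)) ξ
          = -(fderiv ℝ u x ξ * Real.exp (-u x)) := by
        simp [mul_comm]
      rw [h3] at h2
      exact h2)
  simp only [ContinuousLinearMap.mul_apply', one_mul, zero_mul] at hkey
  rw [integral_zero, neg_zero] at hkey
  have : ∀ x, ⟪gradient u x, ξ⟫_ℝ * Real.exp (-u x)
      = -(-(fderiv ℝ u x ξ * Real.exp (-u x))) := by
    intro x; rw [hgrad]; ring
  rw [integral_congr_ae (Filter.Eventually.of_forall this)]
  rw [integral_neg, hkey, neg_zero]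
end

section
/- Let Δ⁺ ⊂ ℝ² be the triangle with vertices (0,0), (6,0), (3, 3√3), let the density be μ(p) = ∏_{α ∈ Φ⁺} ⟨α, p⟩ where Φ⁺ = {(1,0)', (1/2, √3/2)', (3/2, √3/2)'} appropriately normalized so that μ(x,y) = y·(√3 x - y)·(√3 x + y) up to a positive constant. Then the barycenter of Δ⁺ with respect to μ(p) dp lies in the interior of the translated cone 2ρ + C, where 2ρ = (3, √3) and C is the cone generated by (3/2, √3/2) and (3/2, -√3/2) and (0,√3). -/
/-!
The triangle is the region `0 ≤ y ≤ √3 · min x (6 - x)` over `[0, 6]`, so by Fubini every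
moment of `μ` is an iterated integral of a polynomial, and folding `[3, 6]` onto `[0, 3]` by
`x ↦ 6 - x` leaves a single polynomial integral per moment. This gives `∫ μ = 2916/5`,
`∫ x μ = 2187` and `∫ y μ = 729√3`, so the barycenter is `(15/4, 5√3/4) = 2ρ + (3/4, √3/4)`.
The generators `(3/2, -√3/2)` and `(0, √3)` alone span the open cone `{x > 0, x + √3 y > 0}`,
which contains `(3/4, √3/4)`.
-/

open MeasureTheory Set

/-- The moment polytope of the variety of complete conics: the triangle with
vertices (0,0), (6,0), (3, 3√3). -/
noncomputable def delta4 : Set (ℝ × ℝ) :=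
  convexHull ℝ {((0:ℝ), (0:ℝ)), ((6:ℝ), (0:ℝ)), ((3:ℝ), 3 * Real.sqrt 3)}

/-- The Duistermaat–Heckman density `μ(x,y) = y (√3 x - y)(√3 x + y) = y (3x² - y²)`,
the product of the pairings with the three positive roots. -/
noncomputable def mu4 (p : ℝ × ℝ) : ℝ := p.2 * (3 * p.1 ^ 2 - p.2 ^ 2)

/-- The barycenter of `delta4` with respect to the measure `mu4 dp`. -/
noncomputable def bar4 : ℝ × ℝ :=
  ((∫ p in delta4, p.1 * mu4 p) / (∫ p in delta4, mu4 p),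
   (∫ p in delta4, p.2 * mu4 p) / (∫ p in delta4, mu4 p))

/-- The cone generated by (3/2, √3/2), (3/2, -√3/2) and (0, √3). -/
noncomputable def cone4 : Set (ℝ × ℝ) :=
  {v | ∃ a b c : ℝ, 0 ≤ a ∧ 0 ≤ b ∧ 0 ≤ c ∧
    v = a • (((3:ℝ)/2, Real.sqrt 3 / 2) : ℝ × ℝ)
      + b • (((3:ℝ)/2, -(Real.sqrt 3 / 2)) : ℝ × ℝ)
      + c • (((0:ℝ), Real.sqrt 3) : ℝ × ℝ)}

section RegionBetween

variable {α E : Type*} [MeasurableSpace α] {μ : Measure α} [SFinite μ]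
  [NormedAddCommGroup E] [NormedSpace ℝ E] {f g : α → ℝ} {F : α × ℝ → E}

theorem setIntegral_region_between_cc {s : Set α} (hf : Measurable f) (hg : Measurable g)
    (hs : MeasurableSet s)
    (hF : IntegrableOn F {p | p.1 ∈ s ∧ p.2 ∈ Icc (f p.1) (g p.1)} (μ.prod volume)) :
    ∫ p in {p | p.1 ∈ s ∧ p.2 ∈ Icc (f p.1) (g p.1)}, F p ∂μ.prod volume
      = ∫ x in s, (∫ y in Icc (f x) (g x), F (x, y)) ∂μ := by
  have hS := measurableSet_region_between_cc hf hg hs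
  rw [← integral_indicator hS, integral_prod _ ((integrable_indicator_iff hS).2 hF),
    ← integral_indicator hs]
  congr 1 with x
  by_cases hx : x ∈ s <;> simp [indicator, hx, ← integral_indicator measurableSet_Icc]

end RegionBetween

theorem setIntegral_region_between_Icc_eq_intervalIntegral {E : Type*} [NormedAddCommGroup E]
    [NormedSpace ℝ E] {a b : ℝ} {f g : ℝ → ℝ} {F : ℝ × ℝ → E} (hab : a ≤ b)
    (hf : Measurable f) (hg : Measurable g) (hfg : ∀ x ∈ Icc a b, f x ≤ g x)
    (hF : IntegrableOn F {p | p.1 ∈ Icc a b ∧ p.2 ∈ Icc (f p.1) (g p.1)}) :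
    ∫ p in {p | p.1 ∈ Icc a b ∧ p.2 ∈ Icc (f p.1) (g p.1)}, F p
      = ∫ x in a..b, ∫ y in f x..g x, F (x, y) := by
  rw [Measure.volume_eq_prod] at hF ⊢
  rw [setIntegral_region_between_cc hf hg measurableSet_Icc hF, integral_Icc_eq_integral_Ioc,
    ← intervalIntegral.integral_of_le hab]
  refine intervalIntegral.integral_congr fun x hx => ?_
  rw [uIcc_of_le hab] at hx
  rw [intervalIntegral.integral_of_le (hfg x hx), integral_Icc_eq_integral_Ioc]

theorem intervalIntegral_comp_min_sub {b : ℝ} (hb : 0 ≤ b) {f : ℝ → ℝ → ℝ}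
    (hf : Continuous (Function.uncurry f)) :
    ∫ x in 0..b, f x (min x (b - x)) = ∫ x in 0..b / 2, (f x x + f (b - x) x) := by
  have hmin : Continuous fun x => f x (min x (b - x)) :=
    hf.comp (continuous_id.prodMk (continuous_id.min (continuous_const.sub continuous_id)))
  have hdiag : Continuous fun x => f x x := hf.comp (continuous_id.prodMk continuous_id)
  have hflip : Continuous fun x => f (b - x) x :=
    hf.comp ((continuous_const.sub continuous_id).prodMk continuous_id)
  rw [← intervalIntegral.integral_add_adjacent_intervals (b := b / 2)
    (hmin.intervalIntegrable _ _) (hmin.intervalIntegrable _ _),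
    intervalIntegral.integral_add (hdiag.intervalIntegrable _ _) (hflip.intervalIntegrable _ _)]
  congr 1
  · refine intervalIntegral.integral_congr fun x hx => ?_
    rw [uIcc_of_le (by linarith)] at hx
    simp only [min_eq_left (show x ≤ b - x by linarith [hx.2])]
  · have reflect := intervalIntegral.integral_comp_sub_left (a := 0) (b := b / 2)
      (fun x => f x (b - x)) b
    simp only [sub_sub_cancel, sub_zero, show b - b / 2 = b / 2 by ring] at reflect
    rw [reflect]
    refine intervalIntegral.integral_congr fun x hx => ?_
    rw [uIcc_of_le (by linarith)] at hx
    simp only [min_eq_right (show b - x ≤ x by linarith [hx.1])]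

theorem sqrt_three_sq : √3 ^ 2 = 3 := Real.sq_sqrt (by norm_num)

theorem delta4_eq_halfPlanes :
    delta4 = {p : ℝ × ℝ | 0 ≤ p.2 ∧ p.2 ≤ √3 * p.1 ∧ p.2 ≤ √3 * (6 - p.1)} := by
  have hs := sqrt_three_sq
  have hs0 : 0 < √3 := by positivity
  apply (convexHull_min _ _).antisymm
  · rintro ⟨x, y⟩ ⟨hy, hyx, hyx'⟩
    -- barycentric coordinates of `(x, y)`
    set w : Fin 3 → ℝ := ![1 - x / 6 - y * √3 / 18, x / 6 - y * √3 / 18, y * √3 / 9]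
    set z : Fin 3 → ℝ × ℝ := ![(0, 0), (6, 0), (3, 3 * √3)]
    have hw : ∀ i ∈ Finset.univ, 0 ≤ w i := by
      simp only [Finset.mem_univ, forall_const, Fin.forall_fin_succ, IsEmpty.forall_iff, w,
        Matrix.cons_val_zero, Matrix.cons_val_succ]
      refine ⟨?_, ?_, ?_, trivial⟩ <;> nlinarith
    have hz : ∀ i, z i ∈ ({(0, 0), (6, 0), (3, 3 * √3)} : Set (ℝ × ℝ)) := by
      simp [Fin.forall_fin_succ, z]
    have hsum : ∑ i, w i • z i = (x, y) := by
      simp only [Fin.sum_univ_three, w, z, Matrix.cons_val_zero, Matrix.cons_val_one,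
        Matrix.cons_val_two, Matrix.tail_cons, Matrix.head_cons, Prod.smul_mk, smul_eq_mul,
        Prod.mk_add_mk]
      ext
      · ring
      · linear_combination (y / 3) * hs
    rw [← hsum]
    refine (convex_convexHull ℝ _).sum_mem hw ?_ fun i _ => subset_convexHull ℝ _ (hz i)
    simp only [Fin.sum_univ_three, w, Matrix.cons_val_zero, Matrix.cons_val_one,
      Matrix.cons_val_two, Matrix.tail_cons, Matrix.head_cons]
    ring
  · rintro p (rfl | rfl | rfl) <;> refine ⟨?_, ?_, ?_⟩ <;> dsimp only <;> nlinarith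
  · rintro p ⟨hp, hp', hp''⟩ q ⟨hq, hq', hq''⟩ a b ha hb hab
    refine ⟨?_, ?_, ?_⟩ <;>
    simp only [Prod.fst_add, Prod.snd_add, Prod.smul_fst, Prod.smul_snd, smul_eq_mul] <;>
    nlinarith

theorem delta4_eq_region_between :
    delta4 = {p : ℝ × ℝ | p.1 ∈ Icc 0 6 ∧ p.2 ∈ Icc 0 (√3 * min p.1 (6 - p.1))} := by
  have hs0 : 0 < √3 := by positivity
  ext ⟨x, y⟩
  simp only [delta4_eq_halfPlanes, mem_ofPred_eq, mem_Icc, mul_min_of_nonneg _ _ hs0.le,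
    le_min_iff]
  constructor
  · rintro ⟨hy, hyx, hyx'⟩
    exact ⟨⟨by nlinarith, by nlinarith⟩, hy, hyx, hyx'⟩
  · rintro ⟨-, hy, hyx, hyx'⟩
    exact ⟨hy, hyx, hyx'⟩

theorem setIntegral_delta4 {F : ℝ × ℝ → ℝ} (hF : Continuous F) :
    ∫ p in delta4, F p = ∫ x in (0 : ℝ)..6, ∫ y in (0 : ℝ)..√3 * min x (6 - x), F (x, y) := by
  have hint : IntegrableOn F delta4 :=
    hF.continuousOn.integrableOn_compact ((toFinite _).isCompact_convexHull ℝ)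
  rw [delta4_eq_region_between] at hint ⊢
  exact setIntegral_region_between_Icc_eq_intervalIntegral (by norm_num) measurable_const
    (by fun_prop) (fun x hx => mul_nonneg (Real.sqrt_nonneg 3) (le_min hx.1 (by linarith [hx.2])))
    hint

theorem integral_mu4_slice (x m : ℝ) :
    ∫ y in (0 : ℝ)..√3 * m, mu4 (x, y) = 9 / 2 * x ^ 2 * m ^ 2 - 9 / 4 * m ^ 4 := by
  rw [intervalIntegral.integral_deriv_eq_sub' (fun y => 3 / 2 * x ^ 2 * y ^ 2 - y ^ 4 / 4) ?_
    (by fun_prop) (by unfold mu4; fun_prop)]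
  · linear_combination (3 / 2 * x ^ 2 * m ^ 2 - m ^ 4 / 4 * (√3 ^ 2 + 3)) * sqrt_three_sq
  · ext y
    simp (disch := fun_prop) [mu4]
    ring

theorem integral_snd_mul_mu4_slice (x m : ℝ) :
    ∫ y in (0 : ℝ)..√3 * m, y * mu4 (x, y) = √3 * (3 * x ^ 2 * m ^ 3 - 9 / 5 * m ^ 5) := by
  rw [intervalIntegral.integral_deriv_eq_sub' (fun y => x ^ 2 * y ^ 3 - y ^ 5 / 5) ?_
    (by fun_prop) (by unfold mu4; fun_prop)]
  · linear_combination (√3 * x ^ 2 * m ^ 3 - √3 * m ^ 5 / 5 * (√3 ^ 2 + 3)) * sqrt_three_sq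
  · ext y
    simp (disch := fun_prop) [mu4]
    ring

theorem integral_mu4 : ∫ p in delta4, mu4 p = 2916 / 5 := by
  rw [setIntegral_delta4 (by unfold mu4; fun_prop)]
  simp only [integral_mu4_slice]
  rw [intervalIntegral_comp_min_sub (f := fun x m => 9 / 2 * x ^ 2 * m ^ 2 - 9 / 4 * m ^ 4)
      (by norm_num) (by fun_prop),
    intervalIntegral.integral_deriv_eq_sub'
      (fun x => 54 * x ^ 3 - 27 / 2 * x ^ 4 + 9 / 10 * x ^ 5) ?_ (by fun_prop) (by fun_prop)]
  · norm_num
  · ext x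
    simp (disch := fun_prop)
    ring

theorem integral_fst_mul_mu4 : ∫ p in delta4, p.1 * mu4 p = 2187 := by
  rw [setIntegral_delta4 (by unfold mu4; fun_prop)]
  simp only [intervalIntegral.integral_const_mul, integral_mu4_slice]
  rw [intervalIntegral_comp_min_sub
      (f := fun x m => x * (9 / 2 * x ^ 2 * m ^ 2 - 9 / 4 * m ^ 4)) (by norm_num) (by fun_prop),
    intervalIntegral.integral_deriv_eq_sub'
      (fun x => 324 * x ^ 3 - 243 / 2 * x ^ 4 + 27 / 2 * x ^ 5) ?_ (by fun_prop) (by fun_prop)]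
  · norm_num
  · ext x
    simp (disch := fun_prop)
    ring

theorem integral_snd_mul_mu4 : ∫ p in delta4, p.2 * mu4 p = 729 * √3 := by
  rw [setIntegral_delta4 (by unfold mu4; fun_prop)]
  simp only [integral_snd_mul_mu4_slice]
  rw [intervalIntegral_comp_min_sub
      (f := fun x m => √3 * (3 * x ^ 2 * m ^ 3 - 9 / 5 * m ^ 5)) (by norm_num) (by fun_prop),
    intervalIntegral.integral_deriv_eq_sub'
      (fun x => √3 * (27 * x ^ 4 - 36 / 5 * x ^ 5 + 2 / 5 * x ^ 6)) ?_ (by fun_prop) (by fun_prop)]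
  · norm_num
    ring
  · ext x
    simp (disch := fun_prop)
    ring

theorem bar4_eq : bar4 = (15 / 4, 5 / 4 * √3) := by
  rw [bar4, integral_mu4, integral_fst_mul_mu4, integral_snd_mul_mu4]
  ext <;> ring

theorem mem_interior_cone4 {v : ℝ × ℝ} (h₁ : 0 < v.1) (h₂ : 0 < v.1 + √3 * v.2) :
    v ∈ interior cone4 := by
  refine interior_maximal (t := {w : ℝ × ℝ | 0 < w.1 ∧ 0 < w.1 + √3 * w.2}) ?_
    ((isOpen_lt continuous_const continuous_fst).inter (isOpen_lt continuous_const
      (continuous_fst.add (continuous_const.mul continuous_snd)))) ⟨h₁, h₂⟩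
  rintro ⟨x, y⟩ ⟨hx, hxy⟩
  refine ⟨0, 2 * x / 3, (x + √3 * y) / 3, le_rfl, by positivity, by positivity, ?_⟩
  ext
  · simp only [Prod.smul_mk, smul_eq_mul, Prod.mk_add_mk]
    ring
  · simp only [Prod.smul_mk, smul_eq_mul, Prod.mk_add_mk]
    linear_combination (-y / 3) * sqrt_three_sq

/-- The barycenter of the moment polytope of the variety of complete conics lies in
the interior of the translated cone `2ρ + C`, where `2ρ = (3, √3)`. -/
theorem stmt4 :
    bar4 ∈ (fun v => (((3:ℝ), Real.sqrt 3) : ℝ × ℝ) + v) '' interior cone4 := by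
  refine ⟨(3 / 4, √3 / 4), mem_interior_cone4 (by norm_num) (by positivity), ?_⟩
  rw [bar4_eq]
  ext <;> simp only [Prod.mk_add_mk] <;> ring
end

section
/- Let G be a group, H ≤ G a subgroup, λ : ℂ* → G a group homomorphism with image normalizing H, and m a positive integer. Let H̃₀ = ⋃_{z ∈ ℂ*} Hλ(z) × {z^m} ⊆ G × ℂ*. Then H̃₀ is a subgroup of G × ℂ*, and the subgroup G × {1} acts transitively on the coset space (G × ℂ*)/H̃₀. -/
/-- The subset `H̃₀ = ⋃_{z ∈ ℂ*} Hλ(z) × {z^m}` of `G × ℂ*`. -/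
def Htilde {G : Type*} [Group G] (H : Subgroup G) (lam : ℂˣ →* G) (m : ℕ) :
    Set (G × ℂˣ) :=
  {p | ∃ h ∈ H, ∃ z : ℂˣ, p = (h * lam z, z ^ m)}

/-!
`λ(z)` normalizes `H`, so `h₁λ(z₁) · h₂λ(z₂) = (h₁ · λ(z₁)h₂λ(z₁)⁻¹) λ(z₁z₂)` and
`(hλ(z))⁻¹ = (λ(z⁻¹)h⁻¹λ(z⁻¹)⁻¹) λ(z⁻¹)`; together with `z ↦ z^m` being a homomorphism this makes
`H̃₀` a subgroup. Since every element of `ℂ*` is an `m`-th power, `H̃₀` projects onto `ℂ*`, and then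
`G × {1}` already moves any coset of `H̃₀` to any other.
-/

theorem IsAlgClosed.units_pow_surjective {k : Type*} [Field k] [IsAlgClosed k] {n : ℕ}
    (hn : 0 < n) : Function.Surjective (fun z : kˣ => z ^ n) := by
  intro x
  obtain ⟨z, hz⟩ := IsAlgClosed.exists_pow_nat_eq (x : k) hn
  have hz₀ : z ≠ 0 := by
    rintro rfl
    exact x.ne_zero (by rw [← hz, zero_pow hn.ne'])
  exact ⟨Units.mk0 z hz₀, Units.ext (by simp [hz])⟩

namespace Subgroup

variable {G C D : Type*} [Group G] [Group C] [Group D]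

def twistedGraph (H : Subgroup G) (lam : C →* G) (hnorm : ∀ z, lam z ∈ normalizer (H : Set G))
    (f : C →* D) : Subgroup (G × D) where
  carrier := {p | ∃ h ∈ H, ∃ z, p = (h * lam z, f z)}
  one_mem' := ⟨1, H.one_mem, 1, by simp [Prod.one_eq_mk]⟩
  mul_mem' := by
    rintro _ _ ⟨h₁, hh₁, z₁, rfl⟩ ⟨h₂, hh₂, z₂, rfl⟩
    refine ⟨h₁ * (lam z₁ * h₂ * (lam z₁)⁻¹),
      H.mul_mem hh₁ ((mem_normalizer_iff.mp (hnorm z₁) h₂).mp hh₂), z₁ * z₂, ?_⟩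
    simp [mul_assoc]
  inv_mem' := by
    rintro _ ⟨h, hh, z, rfl⟩
    refine ⟨lam z⁻¹ * h⁻¹ * (lam z⁻¹)⁻¹,
      (mem_normalizer_iff.mp (hnorm z⁻¹) h⁻¹).mp (H.inv_mem hh), z⁻¹, ?_⟩
    simp [mul_assoc]

end Subgroup

theorem exists_mul_eq_mul_of_surjOn_snd {G D : Type*} [Group G] [Group D] {S : Set (G × D)}
    (hS : Set.SurjOn Prod.snd S Set.univ) (p q : G × D) :
    ∃ g : G, ∃ s ∈ S, ((g, (1 : D)) : G × D) * p = q * s := by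
  obtain ⟨s, hs, hs₂⟩ := hS (Set.mem_univ (q.2⁻¹ * p.2))
  refine ⟨q.1 * s.1 * p.1⁻¹, s, hs, ?_⟩
  ext <;> simp [hs₂]

/-- Let `G` be a group, `H ≤ G`, `λ : ℂ* → G` a homomorphism with image normalizing
`H`, and `m` a positive integer.  Then `H̃₀ = ⋃_z Hλ(z) × {z^m}` is a subgroup of
`G × ℂ*`, and `G × {1}` acts transitively on the coset space `(G × ℂ*)/H̃₀`. -/
theorem stmt6 {G : Type*} [Group G] (H : Subgroup G) (lam : ℂˣ →* G)
    (hnorm : ∀ z : ℂˣ, lam z ∈ Subgroup.normalizer (H : Set G)) (m : ℕ) (hm : 0 < m) :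
    (∃ S : Subgroup (G × ℂˣ), (S : Set (G × ℂˣ)) = Htilde H lam m) ∧
    (∀ p q : G × ℂˣ, ∃ g : G, ∃ h ∈ Htilde H lam m,
      ((g, (1 : ℂˣ)) : G × ℂˣ) * p = q * h) := by
  refine ⟨⟨H.twistedGraph lam hnorm (powMonoidHom m), rfl⟩, exists_mul_eq_mul_of_surjOn_snd ?_⟩
  intro d _
  obtain ⟨z, rfl⟩ := IsAlgClosed.units_pow_surjective hm d
  exact ⟨(lam z, z ^ m), ⟨1, H.one_mem, z, by simp⟩, rfl⟩
end
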